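/- Let C be a curve of genus g ≥ 2 over F_q, and suppose d > 2g. Then C has at least one closed point of degree d. -/

import Mathlib

/-!
If `C` had no closed point of degree `d`, every point of `C(𝔽_{q^d})` would already be defined
over `𝔽_{q^(d/p)}` for some prime `p ∣ d`, so `#C(𝔽_{q^d}) ≤ ∑_{p ∣ d} #C(𝔽_{q^(d/p)})`.
By Serre's bound the left side is at least `q^d + 1 - 2g q^(d/2)`, while the right side is
`O(q^(d/2) + g q^(d/4))`; since `d > 2g`, the gap is positive as soon as `q^d ≥ 512`.
The seven remaining triples `(q, g, d)` are checked numerically; for `(2, 2, 6)` this needs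
Serre's `g ⌊2 √(q^m)⌋` rather than Weil's `2g √(q^m)`.
-/

open Finset

namespace Nat

theorem sum_properDivisors_le_sum_primeFactors (f : ℕ → ℕ) (n : ℕ) :
    ∑ m ∈ n.properDivisors, f m ≤ ∑ p ∈ n.primeFactors, ∑ m ∈ (n / p).divisors, f m := by
  have hmaps : ∀ m ∈ n.properDivisors, (n / m).minFac ∈ n.primeFactors := by
    intro m hm
    obtain ⟨hmn, hlt⟩ := mem_properDivisors.mp hm
    have hn : n ≠ 0 := by omega
    have hquot : n / m ≠ 1 := by
      intro h
      have := Nat.div_mul_cancel hmn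
      rw [h, one_mul] at this
      omega
    exact mem_primeFactors.mpr ⟨minFac_prime hquot,
      (minFac_dvd _).trans (Nat.div_dvd_of_dvd hmn), hn⟩
  rw [← sum_fiberwise_of_maps_to hmaps]
  refine sum_le_sum fun _ _ => sum_le_sum_of_subset fun m hm => ?_
  obtain ⟨hprop, rfl⟩ := mem_filter.mp hm
  obtain ⟨hmn, hlt⟩ := mem_properDivisors.mp hprop
  have hmul : (n / m).minFac * m ∣ n := by
    simpa only [Nat.div_mul_cancel hmn] using Nat.mul_dvd_mul_right (minFac_dvd (n / m)) m
  have hp := mem_primeFactors.mp (hmaps m hprop)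
  exact mem_divisors.mpr ⟨Nat.dvd_div_of_mul_dvd hmul,
    (Nat.div_pos (le_of_dvd (by omega) hp.2.1) hp.1.pos).ne'⟩

theorem sum_divisors_le_add_sum_primeFactors (f : ℕ → ℕ) (n : ℕ) :
    ∑ m ∈ n.divisors, f m ≤ f n + ∑ p ∈ n.primeFactors, ∑ m ∈ (n / p).divisors, f m := by
  rcases eq_or_ne n 0 with rfl | hn
  · simp
  rw [← insert_self_properDivisors hn, sum_insert self_notMem_properDivisors]
  exact Nat.add_le_add_left (sum_properDivisors_le_sum_primeFactors f n) _

theorem sum_primeFactors_div_le_sum_Icc {M : Type*} [AddCommMonoid M] [PartialOrder M]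
    [IsOrderedAddMonoid M] (f : ℕ → M) (hf : ∀ m, 0 ≤ f m) (n : ℕ) :
    ∑ p ∈ n.primeFactors, f (n / p) ≤ ∑ m ∈ Icc 1 (n / 2), f m := by
  have hinj : Set.InjOn (n / ·) n.primeFactors := by
    intro p hp p' hp' h
    rw [← Nat.div_div_self (dvd_of_mem_primeFactors hp) (mem_primeFactors.mp hp).2.2,
      ← Nat.div_div_self (dvd_of_mem_primeFactors hp') (mem_primeFactors.mp hp').2.2]
    exact congrArg (n / ·) h
  rw [← sum_image hinj]
  refine sum_le_sum_of_subset_of_nonneg (fun m hm => ?_) fun m _ _ => hf m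
  obtain ⟨p, hp, rfl⟩ := mem_image.mp hm
  have hp2 := (prime_of_mem_primeFactors hp).two_le
  exact mem_Icc.mpr ⟨Nat.div_pos (le_of_mem_primeFactors hp) (by omega),
    Nat.div_le_div_left hp2 (by norm_num)⟩

theorem sq_two_mul_add_one_le_two_pow {d : ℕ} (hd : 9 ≤ d) : (2 * d + 1) ^ 2 ≤ 2 ^ d := by
  induction d, hd using Nat.le_induction with
  | base => norm_num
  | succ n hn ih => rw [pow_succ 2 n]; nlinarith

theorem sq_two_mul_add_one_le_pow {q d : ℕ} (hq : 2 ≤ q) (hd : 512 ≤ q ^ d) :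
    (2 * d + 1) ^ 2 ≤ q ^ d := by
  rcases le_or_gt 9 d with h9 | h9
  · exact (sq_two_mul_add_one_le_two_pow h9).trans (Nat.pow_le_pow_left hq d)
  · exact le_trans (by interval_cases d <;> norm_num) hd

end Nat

theorem sum_Icc_pow_le {R : Type*} [CommRing R] [LinearOrder R] [IsStrictOrderedRing R]
    {y c : R} (hy : 1 < y) (hc : y ≤ c * (y - 1)) (k : ℕ) :
    ∑ m ∈ Icc 1 k, y ^ m ≤ c * y ^ k := by
  induction k with
  | zero =>
    rw [Icc_eq_empty (by norm_num), sum_empty, pow_zero, mul_one]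
    nlinarith
  | succ k ih =>
    rw [sum_Icc_succ_top (Nat.le_add_left 1 k), pow_succ]
    nlinarith [pow_pos (zero_lt_one.trans hy) k]

theorem sum_primeFactors_weil_le {q : ℕ} (hq : 2 ≤ q) {g : ℝ} (hg : 0 ≤ g) (d : ℕ) :
    ∑ p ∈ d.primeFactors, ((q : ℝ) ^ (d / p) + 1 + 2 * g * √(q : ℝ) ^ (d / p))
      ≤ 2 * (q : ℝ) ^ (d / 2) + (d / 2 : ℕ) + 8 * g * √(q : ℝ) ^ (d / 2) := by
  have hqR : (2 : ℝ) ≤ q := by exact_mod_cast hq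
  have hs : 4 / 3 < √(q : ℝ) := by
    nlinarith [Real.sq_sqrt (by positivity : (0 : ℝ) ≤ q), Real.sqrt_nonneg (q : ℝ)]
  calc _ ≤ ∑ m ∈ Icc 1 (d / 2), ((q : ℝ) ^ m + 1 + 2 * g * √(q : ℝ) ^ m) :=
        Nat.sum_primeFactors_div_le_sum_Icc _ (fun m => by positivity) d
    _ = ∑ m ∈ Icc 1 (d / 2), (q : ℝ) ^ m + (d / 2 : ℕ)
          + 2 * g * ∑ m ∈ Icc 1 (d / 2), √(q : ℝ) ^ m := by
        rw [sum_add_distrib, sum_add_distrib, ← mul_sum]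
        simp
    _ ≤ 2 * (q : ℝ) ^ (d / 2) + (d / 2 : ℕ) + 2 * g * (4 * √(q : ℝ) ^ (d / 2)) := by
        gcongr
        · exact sum_Icc_pow_le (by linarith) (by linarith) _
        · exact sum_Icc_pow_le (by linarith) (by linarith) _
    _ = _ := by ring

/-- `g ⌊2 √(q ^ m)⌋`, Serre's bound for `|#C(𝔽_{q^m}) - q ^ m - 1|`. -/
def serreError (q g m : ℕ) : ℕ := g * Nat.sqrt (4 * q ^ m)

theorem Real.floor_two_mul_sqrt (n : ℕ) : ⌊2 * √(n : ℝ)⌋ = Nat.sqrt (4 * n) := by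
  rw [← Real.floor_real_sqrt_eq_nat_sqrt, Nat.cast_mul, Real.sqrt_mul (by norm_num)]
  norm_num

theorem serreError_le (q g m : ℕ) : (serreError q g m : ℝ) ≤ 2 * g * √(q : ℝ) ^ m := by
  have hs2 : √(q : ℝ) ^ 2 = q := Real.sq_sqrt q.cast_nonneg
  have hsq : ((Nat.sqrt (4 * q ^ m) : ℕ) : ℝ) ^ 2 ≤ (2 * √(q : ℝ) ^ m) ^ 2 := by
    rw [mul_pow, ← pow_mul, pow_mul', hs2]
    exact_mod_cast Nat.sqrt_le' (4 * q ^ m)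
  have hsqrt := (pow_le_pow_iff_left₀ (by positivity) (by positivity) two_ne_zero).mp hsq
  rw [serreError, Nat.cast_mul]
  linarith [mul_le_mul_of_nonneg_left hsqrt g.cast_nonneg]

theorem serre_bounds_of_abs_le {N q g m : ℕ}
    (h : |(N : ℝ) - (q : ℝ) ^ m - 1| ≤ g * ⌊2 * √((q : ℝ) ^ m)⌋) :
    N ≤ q ^ m + 1 + serreError q g m ∧ q ^ m + 1 ≤ N + serreError q g m := by
  rw [← Nat.cast_pow, Real.floor_two_mul_sqrt] at h
  obtain ⟨hlow, hup⟩ := abs_le.mp h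
  constructor
  · have : (N : ℝ) ≤ ((q ^ m + 1 + serreError q g m : ℕ) : ℝ) := by
      push_cast [serreError] at hup ⊢; linarith
    exact_mod_cast this
  · have : ((q ^ m + 1 : ℕ) : ℝ) ≤ ((N + serreError q g m : ℕ) : ℝ) := by
      push_cast [serreError] at hlow ⊢; linarith
    exact_mod_cast this

theorem sum_primeFactors_serre_lt_of_le_pow {q g d : ℕ} (hq : 2 ≤ q) (hgd : 2 * g < d)
    (hd : 512 ≤ q ^ d) :
    ∑ p ∈ d.primeFactors, (q ^ (d / p) + 1 + serreError q g (d / p)) + serreError q g d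
      < q ^ d + 1 := by
  set s := √(q : ℝ)
  set k := d / 2
  have hs2 : s ^ 2 = q := Real.sq_sqrt q.cast_nonneg
  have hs0 : 0 ≤ s := Real.sqrt_nonneg _
  have hx2 : (s ^ d) ^ 2 = (q : ℝ) ^ d := by rw [← pow_mul, mul_comm, pow_mul, hs2]
  have hu2 : (s ^ k) ^ 2 = (q : ℝ) ^ k := by rw [← pow_mul, mul_comm, pow_mul, hs2]
  have hux : (s ^ k) ^ 2 ≤ s ^ d := by
    rw [← pow_mul]
    exact pow_le_pow_right₀ (Real.one_le_sqrt.mpr (by exact_mod_cast hq.trans' one_le_two))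
      (by omega)
  have hx16 : (16 : ℝ) ≤ s ^ d := by
    have h : (512 : ℝ) ≤ (s ^ d) ^ 2 := by rw [hx2]; exact_mod_cast hd
    nlinarith [pow_nonneg hs0 d]
  have hxd : (2 * d + 1 : ℝ) ≤ s ^ d := by
    have h : ((2 * d + 1 : ℕ) : ℝ) ^ 2 ≤ (s ^ d) ^ 2 := by
      rw [hx2]; exact_mod_cast Nat.sq_two_mul_add_one_le_pow hq hd
    push_cast at h
    nlinarith [pow_nonneg hs0 d]
  have hu : 4 * s ^ k ≤ s ^ d := by nlinarith [pow_nonneg hs0 k]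
  have hk : (k : ℝ) * 2 ≤ d := by exact_mod_cast Nat.div_mul_le_self d 2
  have hg : (2 * g + 1 : ℝ) ≤ d := by exact_mod_cast hgd
  have hsum := sum_primeFactors_weil_le hq g.cast_nonneg d
  have herr : ∑ p ∈ d.primeFactors, ((q : ℝ) ^ (d / p) + 1 + serreError q g (d / p))
      ≤ ∑ p ∈ d.primeFactors, ((q : ℝ) ^ (d / p) + 1 + 2 * g * s ^ (d / p)) :=
    sum_le_sum fun p _ => by linarith [serreError_le q g (d / p)]
  have h : (∑ p ∈ d.primeFactors, ((q : ℝ) ^ (d / p) + 1 + serreError q g (d / p))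
      + serreError q g d : ℝ) < (q : ℝ) ^ d + 1 := by
    nlinarith [serreError_le q g d, mul_le_mul_of_nonneg_left hu (by positivity : (0 : ℝ) ≤ 2 * g),
      mul_le_mul_of_nonneg_right hg (by linarith : (0 : ℝ) ≤ s ^ d),
      mul_le_mul_of_nonneg_right hxd (by linarith : (0 : ℝ) ≤ s ^ d)]
  exact_mod_cast h

theorem sum_primeFactors_serre_lt {q g d : ℕ} (hq : 2 ≤ q) (hg : 2 ≤ g) (hgd : 2 * g < d) :
    ∑ p ∈ d.primeFactors, (q ^ (d / p) + 1 + serreError q g (d / p)) + serreError q g d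
      < q ^ d + 1 := by
  rcases le_or_gt 512 (q ^ d) with hd | hd
  · exact sum_primeFactors_serre_lt_of_le_pow hq hgd hd
  have hq3 : q ≤ 3 := by
    by_contra! h
    have := (Nat.pow_le_pow_left h 5).trans (Nat.pow_le_pow_right (by omega) (by omega : 5 ≤ d))
    norm_num at this
    omega
  have hd8 : d ≤ 8 := by
    by_contra! h
    have := (Nat.pow_le_pow_right (by norm_num) h).trans (Nat.pow_le_pow_left hq d)
    norm_num at this
    omega
  have hg3 : g ≤ 3 := by omega
  interval_cases q <;> interval_cases d <;> interval_cases g <;>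
    simp_all [serreError, Nat.primeFactors, Nat.primeFactorsList_ofNat] <;> norm_num

theorem stmt4_general (q g : ℕ) (hq : IsPrimePow q) (hg : 2 ≤ g) (NC nC : ℕ → ℕ)
    (serre : ∀ m : ℕ, 0 < m →
      |(NC m : ℝ) - (q : ℝ) ^ m - 1| ≤ g * ⌊2 * Real.sqrt ((q : ℝ) ^ m)⌋)
    (hNC : ∀ d : ℕ, 0 < d → NC d = ∑ m ∈ d.divisors, m * nC m)
    (d : ℕ) (hd : 2 * g < d) :
    0 < nC d := by
  have hd0 : 0 < d := by omega
  have hdiv_pos : ∀ p ∈ d.primeFactors, 0 < d / p := fun p hp =>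
    Nat.div_pos (Nat.le_of_mem_primeFactors hp) (Nat.pos_of_mem_primeFactors hp)
  refine Nat.pos_of_ne_zero fun hzero => ?_
  have hsplit : NC d ≤ ∑ p ∈ d.primeFactors, NC (d / p) := by
    rw [hNC d hd0]
    refine (Nat.sum_divisors_le_add_sum_primeFactors (fun m => m * nC m) d).trans ?_
    rw [hzero, mul_zero, zero_add]
    exact (sum_congr rfl fun p hp => (hNC (d / p) (hdiv_pos p hp)).symm).le
  have hupper : ∑ p ∈ d.primeFactors, NC (d / p)
      ≤ ∑ p ∈ d.primeFactors, (q ^ (d / p) + 1 + serreError q g (d / p)) :=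
    sum_le_sum fun p hp => (serre_bounds_of_abs_le (serre _ (hdiv_pos p hp))).1
  have hlower := (serre_bounds_of_abs_le (serre d hd0)).2
  have := sum_primeFactors_serre_lt hq.two_le hg hd
  omega

/-- Lemma 2.1(ii): a curve of genus `g ≥ 2` over `F_q` has a closed point of every
degree `d > 2g`.  `NC m = #C(F_{q^m})` (satisfying the Weil bounds and Serre's
refinement), `nC m` = number of degree-`m` closed points. -/
theorem stmt4 (q g : ℕ) (hq : IsPrimePow q) (hg : 2 ≤ g) (NC nC : ℕ → ℕ)
    (weil : ∀ m : ℕ, 0 < m →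
      |(NC m : ℝ) - (q : ℝ) ^ m - 1| ≤ 2 * g * Real.sqrt ((q : ℝ) ^ m))
    (serre : ∀ m : ℕ, 0 < m →
      |(NC m : ℝ) - (q : ℝ) ^ m - 1| ≤ g * ⌊2 * Real.sqrt ((q : ℝ) ^ m)⌋)
    (hNC : ∀ d : ℕ, 0 < d → NC d = ∑ m ∈ d.divisors, m * nC m)
    (d : ℕ) (hd : 2 * g < d) :
    0 < nC d :=
  stmt4_general q g hq hg NC nC serre hNC d hd
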